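/- The distributivity rule is admissible in the new system: (A → B) ∩ (A → C) <: A → (B ∩ C). -/
import Mathlib


inductive Ty : Type where
  | U : Ty
  | const : ℕ → Ty
  | arrow : Ty → Ty → Ty
  | inter : Ty → Ty → Ty

/-- The part relation A ∈⁺ B. -/
inductive Ty.Part : Ty → Ty → Prop where
  | atomU : Ty.Part .U .U
  | atomC (n : ℕ) : Ty.Part (.const n) (.const n)
  | arrow (A B : Ty) : Ty.Part (.arrow A B) (.arrow A B)
  | interL {A B C : Ty} : Ty.Part A B → Ty.Part A (.inter B C)
  | interR {A B C : Ty} : Ty.Part A C → Ty.Part A (.inter B C)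

/-- Containment A ⊆⁺ B: every part of A is a part of B. -/
def Ty.Contain (A B : Ty) : Prop := ∀ C, Ty.Part C A → Ty.Part C B

/-- Partial domain function. -/
def Ty.dom : Ty → Option Ty
  | .arrow A _ => some A
  | .inter A B => do pure (.inter (← A.dom) (← B.dom))
  | _ => none

/-- Partial codomain function. -/
def Ty.cod : Ty → Option Ty
  | .arrow _ B => some B
  | .inter A B => do pure (.inter (← A.cod) (← B.cod))
  | _ => none

/-- The top predicate: types equivalent to U. -/
inductive Ty.Top : Ty → Prop where
  | u : Ty.Top .U
  | arrow {A B : Ty} : Ty.Top B → Ty.Top (.arrow A B)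
  | inter {A B : Ty} : Ty.Top A → Ty.Top B → Ty.Top (.inter A B)

/-- topInCod(D): some function part of D has a top codomain. -/
def Ty.TopInCod (D : Ty) : Prop := ∃ A B : Ty, Ty.Part (.arrow A B) D ∧ Ty.Top B

/-- The new subtyping relation A <: B. -/
inductive Ty.NSub : Ty → Ty → Prop where
  | reflU : Ty.NSub .U .U
  | reflC (n : ℕ) : Ty.NSub (.const n) (.const n)
  | lbL {A B C : Ty} : Ty.NSub A C → Ty.NSub (.inter A B) C
  | lbR {A B C : Ty} : Ty.NSub B C → Ty.NSub (.inter A B) C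
  | glb {A C D : Ty} : Ty.NSub A C → Ty.NSub A D → Ty.NSub A (.inter C D)
  | arrow {A B C D dB cB : Ty} :
      Ty.Contain B A → B.dom = some dB → B.cod = some cB →
      Ty.NSub C dB → Ty.NSub cB D → ¬ Ty.Top D → ¬ Ty.TopInCod B →
      Ty.NSub A (.arrow C D)
  | utop {A : Ty} : Ty.NSub A .U
  | uarrow {A C D : Ty} : Ty.Top D → Ty.NSub A (.arrow C D)

/-- BCD subtyping A ≤ B. -/
inductive Ty.BSub : Ty → Ty → Prop where
  | refl (A : Ty) : Ty.BSub A A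
  | trans {A B C : Ty} : Ty.BSub A B → Ty.BSub B C → Ty.BSub A C
  | inclL (A B : Ty) : Ty.BSub (.inter A B) A
  | inclR (A B : Ty) : Ty.BSub (.inter A B) B
  | glb {A C D : Ty} : Ty.BSub A C → Ty.BSub A D → Ty.BSub A (.inter C D)
  | arrow {A B C D : Ty} : Ty.BSub C A → Ty.BSub B D → Ty.BSub (.arrow A B) (.arrow C D)
  | distrib (A B C : Ty) : Ty.BSub (.inter (.arrow A B) (.arrow A C)) (.arrow A (.inter B C))
  | utop (A : Ty) : Ty.BSub A .U
  | uarrow (C : Ty) : Ty.BSub .U (.arrow C .U)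

/-- C→D factors A. -/
def Ty.Factors (C D A : Ty) : Prop :=
  ∃ B dB cB : Ty, Ty.Contain B A ∧ B.dom = some dB ∧ B.cod = some cB ∧
    Ty.NSub C dB ∧ Ty.NSub cB D ∧ ¬ Ty.TopInCod B

def Ty.size : Ty → ℕ
  | .U => 0
  | .const _ => 0
  | .arrow A B => 1 + A.size + B.size
  | .inter A B => 1 + A.size + B.size

def Ty.depth : Ty → ℕ
  | .U => 0
  | .const _ => 0
  | .arrow A B => 1 + max A.depth B.depth
  | .inter A B => max A.depth B.depth

lemma nsub_refl (A : Ty) : Ty.NSub A A := by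
  induction A with
  | U => exact .reflU
  | const n => exact .reflC n
  | arrow X Y ihX ihY =>
    by_cases h : Ty.Top Y
    · exact .uarrow h
    · exact .arrow (B := .arrow X Y) (fun _ h => h) rfl rfl ihX ihY h
        (fun ⟨a, b, hp, ht⟩ => by cases hp; exact h ht)
  | inter X Y ihX ihY => exact .glb (.lbL ihX) (.lbR ihY)

lemma nsub_top {A : Ty} (h : Ty.Top A) (X : Ty) : Ty.NSub X A := by
  induction h with
  | u => exact .utop
  | arrow h ih => exact .uarrow h
  | inter _ _ ih1 ih2 => exact .glb ih1 ih2

theorem nsub_distrib (A B C : Ty) :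
    Ty.NSub (.inter (.arrow A B) (.arrow A C)) (.arrow A (.inter B C)) := by
  by_cases hB : Ty.Top B <;> by_cases hC : Ty.Top C
  · exact .uarrow (.inter hB hC)
  · refine .arrow (B := .arrow A C) ?_ rfl rfl (nsub_refl A)
      (.glb (nsub_top hB C) (nsub_refl C)) (fun h => by cases h; exact hC ‹Ty.Top C›)
      (fun ⟨a, b, hp, ht⟩ => by cases hp; exact hC ht)
    intro D hD; cases hD; exact .interR (.arrow A C)
  · refine .arrow (B := .arrow A B) ?_ rfl rfl (nsub_refl A)
      (.glb (nsub_refl B) (nsub_top hC B)) (fun h => by cases h; exact hB ‹Ty.Top B›)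
      (fun ⟨a, b, hp, ht⟩ => by cases hp; exact hB ht)
    intro D hD; cases hD; exact .interL (.arrow A B)
  · refine .arrow (B := .inter (.arrow A B) (.arrow A C)) (fun _ h => h) rfl rfl
      (.glb (nsub_refl A) (nsub_refl A)) (nsub_refl _)
      (fun h => by cases h; exact hB ‹Ty.Top B›) ?_
    rintro ⟨a, b, hp, ht⟩
    cases hp with
    | interL h => cases h; exact hB ht
    | interR h => cases h; exact hC ht
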